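/- arXiv:2010.15855 — 4 statements merged into one kernel-verified Lean document; each statement's English description precedes it below -/
import Mathlib

section
/- Define g(u,v) = (1 - u - 2(1-x)uv - b(1-x)v² - (1-(a+b))(1-x)uv²) / (2 - a + b(1-x)(2-v)v). Then the partial derivative of g with respect to v is negative for all (u,v) ∈ [0,1] × [0,1] with u > 0. -/
/-- The partial derivative of `g` with respect to `v` is negative on `[0,1] × [0,1]`
when `u > 0`. -/
theorem g_deriv_v_neg (a b x : ℝ) (ha : 0 ≤ a) (hb : 0 ≤ b)
    (hab : a + b ≤ 1) (hx0 : 0 ≤ x) (hx1 : x < 1) :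
    ∀ u ∈ Set.Icc (0 : ℝ) 1, 0 < u → ∀ v ∈ Set.Icc (0 : ℝ) 1,
      deriv (fun v' : ℝ =>
          (1 - u - 2 * (1 - x) * u * v' - b * (1 - x) * v' ^ 2
              - (1 - (a + b)) * (1 - x) * u * v' ^ 2)
            / (2 - a + b * (1 - x) * (2 - v') * v')) v < 0 := by
  intro u hu hu0 v hv
  obtain ⟨hu0', hu1⟩ := hu
  obtain ⟨hv0, hv1⟩ := hv
  have hx : 0 < 1 - x := by linarith
  have hD : 0 < 2 - a + b * (1 - x) * (2 - v) * v := by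
    have h1 : 0 ≤ b * (1 - x) * (2 - v) * v :=
      mul_nonneg (mul_nonneg (mul_nonneg hb hx.le) (by linarith)) hv0
    linarith
  -- numerator derivative
  have hN : HasDerivAt (fun v' : ℝ =>
      1 - u - 2 * (1 - x) * u * v' - b * (1 - x) * v' ^ 2
        - (1 - (a + b)) * (1 - x) * u * v' ^ 2)
      (-(2 * (1 - x) * u) - b * (1 - x) * (2 * v) - (1 - (a + b)) * (1 - x) * u * (2 * v)) v := by
    have hp : HasDerivAt (fun y : ℝ => y ^ 2) (2 * v) v := by
      simpa using hasDerivAt_pow 2 v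
    have := (((hasDerivAt_const v (1 - u)).sub
        ((hasDerivAt_id v).const_mul (2 * (1 - x) * u))).sub
        (hp.const_mul (b * (1 - x)))).sub (hp.const_mul ((1 - (a + b)) * (1 - x) * u))
    refine this.congr_deriv ?_
    ring
  -- denominator derivative
  have hDd : HasDerivAt (fun v' : ℝ => 2 - a + b * (1 - x) * (2 - v') * v')
      (b * (1 - x) * (2 - 2 * v)) v := by
    have h1 : HasDerivAt (fun v' : ℝ => b * (1 - x) * (2 - v') * v')
        (b * (1 - x) * (2 - 2 * v)) v := by
      have := (((hasDerivAt_const v (2:ℝ)).sub (hasDerivAt_id v)).const_mul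
        (b * (1 - x))).mul (hasDerivAt_id v)
      refine this.congr_deriv ?_
      simp only [id_eq, Pi.sub_apply]; ring
    have := (hasDerivAt_const v (2 - a)).add h1
    refine this.congr_deriv ?_
    ring
  have hg := hN.div hDd (ne_of_gt hD)
  rw [(show HasDerivAt (fun v' : ℝ =>
          (1 - u - 2 * (1 - x) * u * v' - b * (1 - x) * v' ^ 2
              - (1 - (a + b)) * (1 - x) * u * v' ^ 2)
            / (2 - a + b * (1 - x) * (2 - v') * v')) _ v from hg).deriv]
  apply div_neg_of_neg_of_pos
  · have h1 : 0 < (2 - a) * u + b * (1 - u) := by nlinarith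
    have h2 : 0 < (1 - a) * v + b * v ^ 2 * (1 - x) + 1 := by
      nlinarith [mul_nonneg (by linarith : (0:ℝ) ≤ 1 - a) hv0,
        mul_nonneg (mul_nonneg hb (sq_nonneg v)) hx.le]
    have key : (-(2 * (1 - x) * u) - b * (1 - x) * (2 * v) - (1 - (a + b)) * (1 - x) * u * (2 * v))
          * (2 - a + b * (1 - x) * (2 - v) * v)
        - (1 - u - 2 * (1 - x) * u * v - b * (1 - x) * v ^ 2
            - (1 - (a + b)) * (1 - x) * u * v ^ 2) * (b * (1 - x) * (2 - 2 * v))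
        = -(2 * (1 - x) * ((2 - a) * u + b * (1 - u))
            * ((1 - a) * v + b * v ^ 2 * (1 - x) + 1)) := by ring
    rw [key]
    have : 0 < 2 * (1 - x) * ((2 - a) * u + b * (1 - u))
        * ((1 - a) * v + b * v ^ 2 * (1 - x) + 1) := by positivity
    linarith
  · positivity
end

section
/- Define g(u,v) = (1 - u - 2(1-x)uv - b(1-x)v² - (1-(a+b))(1-x)uv²) / (2 - a + b(1-x)(2-v)v) and p* = (1 - b(1-x)) / (4 - 3x - (a+b)(1-x)). Then g(u,v) > 0 for all (u,v) ∈ (0, p*) × [0,1]. -/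
/-- `g(u,v) > 0` for `(u,v) ∈ (0, p*) × [0,1]`. -/
theorem g_pos_below_pstar (a b x : ℝ) (ha : 0 ≤ a) (hb : 0 ≤ b)
    (hab : a + b ≤ 1) (hx0 : 0 ≤ x) (hx1 : x < 1) :
    ∀ u ∈ Set.Ioo (0 : ℝ) ((1 - b * (1 - x)) / (4 - 3 * x - (a + b) * (1 - x))),
      ∀ v ∈ Set.Icc (0 : ℝ) 1,
        0 < (1 - u - 2 * (1 - x) * u * v - b * (1 - x) * v ^ 2
              - (1 - (a + b)) * (1 - x) * u * v ^ 2)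
            / (2 - a + b * (1 - x) * (2 - v) * v) := by
  intro u hu v hv
  obtain ⟨hu0, hu1⟩ := hu
  obtain ⟨hv0, hv1⟩ := hv
  have hD : (0:ℝ) < 4 - 3 * x - (a + b) * (1 - x) := by nlinarith
  have hu2 : u * (4 - 3 * x - (a + b) * (1 - x)) < 1 - b * (1 - x) :=
    (lt_div_iff₀ hD).mp hu1
  apply div_pos
  · nlinarith [mul_nonneg (mul_nonneg (sub_nonneg.2 hx1.le) hu0.le) (sub_nonneg.2 hv1),
      mul_nonneg (mul_nonneg hb (sub_nonneg.2 hx1.le)) (by nlinarith : (0:ℝ) ≤ 1 - v ^ 2),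
      mul_nonneg (mul_nonneg (mul_nonneg (by linarith : (0:ℝ) ≤ 1 - (a + b)) (sub_nonneg.2 hx1.le)) hu0.le) (by nlinarith : (0:ℝ) ≤ 1 - v ^ 2)]
  · nlinarith [mul_nonneg (mul_nonneg hb (sub_nonneg.2 hx1.le)) (mul_nonneg (by linarith : (0:ℝ) ≤ 2 - v) hv0)]
end

section
/- Define q₊(p) as the larger root of the quadratic numerator of g, i.e. q₊(p) = (-p(1-x) + √((1-x)(b(1-p)² - p(a(1-p) + px - 1)))) / ((1-x)((1-a)p + b(1-p))), and p* = (1 - b(1-x)) / (4 - 3x - (a+b)(1-x)). Then q₊(p) > 1 for p ∈ (0, p*) and q₊(p) < 1 for p ∈ (p*, 1). -/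
/-- `q₊(p) > 1` for `p ∈ (0, p*)` and `q₊(p) < 1` for `p ∈ (p*, 1)`. -/
theorem q_plus_vs_one (a b x : ℝ) (ha : 0 ≤ a) (hb : 0 ≤ b)
    (hab : a + b ≤ 1) (hx0 : 0 ≤ x) (hx1 : x < 1)
    (hden : ∀ p ∈ Set.Ioo (0 : ℝ) 1, 0 < (1 - a) * p + b * (1 - p)) :
    (∀ p ∈ Set.Ioo (0 : ℝ) ((1 - b * (1 - x)) / (4 - 3 * x - (a + b) * (1 - x))),
        1 < (-(p * (1 - x))
              + Real.sqrt ((1 - x) * (b * (1 - p) ^ 2 - p * (a * (1 - p) + p * x - 1))))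
            / ((1 - x) * ((1 - a) * p + b * (1 - p))))
    ∧ (∀ p ∈ Set.Ioo ((1 - b * (1 - x)) / (4 - 3 * x - (a + b) * (1 - x))) (1 : ℝ),
        (-(p * (1 - x))
              + Real.sqrt ((1 - x) * (b * (1 - p) ^ 2 - p * (a * (1 - p) + p * x - 1))))
            / ((1 - x) * ((1 - a) * p + b * (1 - p))) < 1) := by
  have hs : (0:ℝ) < 1 - x := by linarith
  have hD : (0:ℝ) < 4 - 3 * x - (a + b) * (1 - x) := by nlinarith
  constructor
  · intro p hp
    obtain ⟨hp0, hp1⟩ := hp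
    have hpd : p * (4 - 3 * x - (a + b) * (1 - x)) < 1 - b * (1 - x) := by
      rw [lt_div_iff₀ hD] at hp1; linarith
    have hplt1 : p < 1 := by nlinarith
    have hd : 0 < (1 - a) * p + b * (1 - p) := hden p ⟨hp0, hplt1⟩
    set d := (1 - a) * p + b * (1 - p) with hdd
    have he : 0 < (1 - x) * (d + p) := by positivity
    have hsd : 0 < (1 - x) * d := by positivity
    rw [lt_div_iff₀ hsd]
    have hsq : (1 - x) * (d + p) <
        Real.sqrt ((1 - x) * (b * (1 - p) ^ 2 - p * (a * (1 - p) + p * x - 1))) := by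
      rw [show ((1-x)*(d+p)) = Real.sqrt (((1-x)*(d+p))^2) from
        (Real.sqrt_sq he.le).symm]
      apply Real.sqrt_lt_sqrt (by positivity)
      have key : (1 - x) * (b * (1 - p) ^ 2 - p * (a * (1 - p) + p * x - 1))
          - ((1 - x) * (d + p)) ^ 2
          = (1 - x) * (((1 - b * (1 - x)) - p * (4 - 3 * x - (a + b) * (1 - x))) * d) := by
        rw [hdd]; ring
      nlinarith [mul_pos hs (mul_pos (by linarith : (0:ℝ) < (1 - b * (1 - x)) - p * (4 - 3 * x - (a + b) * (1 - x))) hd)]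
    nlinarith [hsq]
  · intro p hp
    obtain ⟨hp1, hplt1⟩ := hp
    have hnum : 0 ≤ 1 - b * (1 - x) := by nlinarith
    have hp0 : 0 < p := lt_of_le_of_lt (by positivity) hp1
    have hpd : 1 - b * (1 - x) < p * (4 - 3 * x - (a + b) * (1 - x)) := by
      rw [div_lt_iff₀ hD] at hp1; linarith
    have hd : 0 < (1 - a) * p + b * (1 - p) := hden p ⟨hp0, hplt1⟩
    set d := (1 - a) * p + b * (1 - p) with hdd
    have he : 0 < (1 - x) * (d + p) := by positivity
    have hsd : 0 < (1 - x) * d := by positivity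
    rw [div_lt_iff₀ hsd]
    have hsq : Real.sqrt ((1 - x) * (b * (1 - p) ^ 2 - p * (a * (1 - p) + p * x - 1)))
        < (1 - x) * (d + p) := by
      apply Real.sqrt_lt' he |>.mpr
      have key : (1 - x) * (b * (1 - p) ^ 2 - p * (a * (1 - p) + p * x - 1))
          - ((1 - x) * (d + p)) ^ 2
          = (1 - x) * (((1 - b * (1 - x)) - p * (4 - 3 * x - (a + b) * (1 - x))) * d) := by
        rw [hdd]; ring
      nlinarith [mul_pos hs (mul_pos (by linarith : (0:ℝ) < p * (4 - 3 * x - (a + b) * (1 - x)) - (1 - b * (1 - x))) hd)]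
    nlinarith [hsq]
end

section
/- For p ∈ (p*, 1), the value q₊(p) = (√((1-x)(b(1-p)² - p(a(1-p) + px - 1))) - p(1-x)) / ((1-x)((1-a)p + b(1-p))) satisfies 0 < q₊(p) < 1, where p* = (1 - b(1-x))/(4 - 3x - (a+b)(1-x)). -/
set_option maxHeartbeats 1000000 in
/-- For `p ∈ (p*, 1)`, the value `q₊(p)` lies strictly between `0` and `1`. -/
theorem q_plus_in_unit_interval (a b x : ℝ) (ha : 0 ≤ a) (hb : 0 ≤ b)
    (hab : a + b ≤ 1) (hx0 : 0 ≤ x) (hx1 : x < 1)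
    (hden : ∀ p ∈ Set.Ioo (0 : ℝ) 1, 0 < (1 - a) * p + b * (1 - p)) :
    ∀ p ∈ Set.Ioo ((1 - b * (1 - x)) / (4 - 3 * x - (a + b) * (1 - x))) (1 : ℝ),
      0 < (Real.sqrt ((1 - x) * (b * (1 - p) ^ 2 - p * (a * (1 - p) + p * x - 1)))
            - p * (1 - x)) / ((1 - x) * ((1 - a) * p + b * (1 - p)))
      ∧ (Real.sqrt ((1 - x) * (b * (1 - p) ^ 2 - p * (a * (1 - p) + p * x - 1)))
            - p * (1 - x)) / ((1 - x) * ((1 - a) * p + b * (1 - p))) < 1 := by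
  intro p hp
  obtain ⟨hps, hp1⟩ := hp
  have hx : (0:ℝ) < 1 - x := by linarith
  have hds : (0:ℝ) < 4 - 3 * x - (a + b) * (1 - x) := by nlinarith
  have hns : (0:ℝ) ≤ 1 - b * (1 - x) := by nlinarith
  have hp0 : 0 < p := lt_of_le_of_lt (div_nonneg hns hds.le) hps
  have hden' := hden p ⟨hp0, hp1⟩
  have hkey : 1 - b * (1 - x) < p * (4 - 3 * x - (a + b) * (1 - x)) := by
    rw [div_lt_iff₀ hds] at hps; linarith
  -- D > (p(1-x))^2
  have hDgt : (p * (1 - x)) ^ 2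
      < (1 - x) * (b * (1 - p) ^ 2 - p * (a * (1 - p) + p * x - 1)) := by
    nlinarith [mul_pos (mul_pos hx (by linarith : (0:ℝ) < 1 - p)) hden']
  have hsq : p * (1 - x)
      < Real.sqrt ((1 - x) * (b * (1 - p) ^ 2 - p * (a * (1 - p) + p * x - 1))) := by
    rw [Real.lt_sqrt (by positivity)]
    exact hDgt
  have hdpos : 0 < (1 - x) * ((1 - a) * p + b * (1 - p)) := mul_pos hx hden'
  refine ⟨div_pos (by linarith) hdpos, ?_⟩
  rw [div_lt_one hdpos, sub_lt_iff_lt_add]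
  have hR : 0 < (1 - x) * ((1 - a) * p + b * (1 - p)) + p * (1 - x) := by positivity
  rw [Real.sqrt_lt' hR]
  -- the linear factor is positive
  have hc2 : 0 < ((1 - x) * (2 - a - b) ^ 2 - (a + b) + x) * p
      + b * (4 - 3 * x - (a + b) * (1 - x)) := by
    rcases lt_or_eq_of_le hb with hb' | hb'
    · have h1 : 0 ≤ ((1 - x) * (2 - a - b) ^ 2 - (a + b) + x) * p := by
        have : 0 ≤ (1 - x) * (2 - a - b) ^ 2 - (a + b) + x := by
          nlinarith [sq_nonneg (1 - a - b), sq_nonneg (2 - a - b)]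
        positivity
      nlinarith [mul_pos hb' hds]
    · -- b = 0, so from hden' we get a < 1
      have hb0 : b = 0 := hb'.symm
      subst hb0
      have ha1 : a < 1 := by nlinarith
      have hc : 0 < (1 - x) * (2 - a - 0) ^ 2 - (a + 0) + x := by
        nlinarith [sq_nonneg (1 - a)]
      nlinarith [mul_pos hc hp0]
  have hkey' : 0 < p * (4 - 3 * x - (a + b) * (1 - x)) - (1 - b * (1 - x)) := by
    linarith
  have hpos : 0 < (1 - x) * ((p * (4 - 3 * x - (a + b) * (1 - x)) - (1 - b * (1 - x)))
      * (((1 - x) * (2 - a - b) ^ 2 - (a + b) + x) * p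
        + b * (4 - 3 * x - (a + b) * (1 - x)))) :=
    mul_pos hx (mul_pos hkey' hc2)
  have hid : (((1 - x) * ((1 - a) * p + b * (1 - p)) + p * (1 - x)) ^ 2
      - (1 - x) * (b * (1 - p) ^ 2 - p * (a * (1 - p) + p * x - 1)))
      * (4 - 3 * x - (a + b) * (1 - x))
      = (1 - x) * ((p * (4 - 3 * x - (a + b) * (1 - x)) - (1 - b * (1 - x)))
      * (((1 - x) * (2 - a - b) ^ 2 - (a + b) + x) * p
        + b * (4 - 3 * x - (a + b) * (1 - x)))) := by ring
  have h2 : 0 < (((1 - x) * ((1 - a) * p + b * (1 - p)) + p * (1 - x)) ^ 2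
      - (1 - x) * (b * (1 - p) ^ 2 - p * (a * (1 - p) + p * x - 1)))
      * (4 - 3 * x - (a + b) * (1 - x)) := hid ▸ hpos
  have h3 := div_pos h2 hds
  rw [mul_div_cancel_right₀ _ hds.ne'] at h3
  linarith
end
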